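/- arXiv:2005.08095 — 2 statements merged into one kernel-verified Lean document; each statement's English description precedes it below -/
import Mathlib

section
/- If G is a connected graph with no pair of true twins, then the strong 2-resolving graph G_SR^2 equals the complement of G. -/
/-- u is maximally distant from v in G. -/
def MaxDistant {V : Type*} (G : SimpleGraph V) (u v : V) : Prop :=
  ∀ w, G.Adj u w → G.dist v w ≤ G.dist v u

/-- u and v are mutually maximally distant in G. -/
def MMD {V : Type*} (G : SimpleGraph V) (u v : V) : Prop :=
  MaxDistant G u v ∧ MaxDistant G v u

/-- The strong d-resolving graph of G. -/
def strongResolvingGraph {V : Type*} (G : SimpleGraph V) (d : ℕ) : SimpleGraph V where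
  Adj u v := u ≠ v ∧ (MMD G u v ∨ d ≤ G.dist u v)
  symm := by
    constructor
    rintro u v ⟨huv, h | h⟩
    · exact ⟨huv.symm, Or.inl ⟨h.2, h.1⟩⟩
    · exact ⟨huv.symm, Or.inr (by rwa [SimpleGraph.dist_comm])⟩
  loopless := by constructor; rintro u ⟨h, -⟩; exact h rfl

/-!
Two distinct vertices at distance at least 2 are adjacent in `G_SR^2` by definition, and so are
non-adjacent vertices of a connected graph. Conversely, if `u ~ v` and `u` is maximally distant
from `v`, every neighbour of `u` lies within distance `d(v, u) = 1` of `v`, so `N[u] ⊆ N[v]`;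
adjacent mutually maximally distant vertices are therefore true twins, which are excluded.
-/

namespace SimpleGraph

variable {V : Type*} {G : SimpleGraph V} {u v : V}

theorem Adj.insert_neighborSet_subset_of_maxDistant (huv : G.Adj u v) (hmax : MaxDistant G u v) :
    insert u (G.neighborSet u) ⊆ insert v (G.neighborSet v) := by
  rintro w (rfl | huw)
  · exact Or.inr huv.symm
  · have hvw : G.edist v w ≤ 1 := by
      rw [← (huv.symm.reachable.trans huw.reachable).coe_dist_eq_edist]
      exact_mod_cast (hmax w huw).trans (dist_eq_one_iff_adj.mpr huv.symm).le
    rcases edist_le_one_iff_adj_or_eq.mp hvw with hvw | rfl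
    · exact Or.inr hvw
    · exact Or.inl rfl

theorem Adj.insert_neighborSet_eq_of_mmd (huv : G.Adj u v) (h : MMD G u v) :
    insert u (G.neighborSet u) = insert v (G.neighborSet v) :=
  (huv.insert_neighborSet_subset_of_maxDistant h.1).antisymm
    (huv.symm.insert_neighborSet_subset_of_maxDistant h.2)

theorem strongResolvingGraph_two_le_compl
    (htwin : ∀ x y : V, insert x (G.neighborSet x) = insert y (G.neighborSet y) → x = y) :
    strongResolvingGraph G 2 ≤ Gᶜ := by
  rintro u v ⟨hne, hmmd | hdist⟩
  · exact ⟨hne, fun huv => hne (htwin u v (huv.insert_neighborSet_eq_of_mmd hmmd))⟩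
  · exact ⟨hne, fun huv => by rw [dist_eq_one_iff_adj.mpr huv] at hdist; omega⟩

theorem Connected.compl_le_strongResolvingGraph_two (hG : G.Connected) :
    Gᶜ ≤ strongResolvingGraph G 2 :=
  fun _ _ ⟨hne, hnadj⟩ => ⟨hne, Or.inr (hG.one_lt_dist_of_ne_of_not_adj hne hnadj)⟩

end SimpleGraph

/-- If a connected graph has no pair of true twins, then its strong 2-resolving
graph is the complement of G. -/
theorem stmt_15 {V : Type*} (G : SimpleGraph V) (hG : G.Connected)
    (htwin : ∀ x y : V,
      insert x (G.neighborSet x) = insert y (G.neighborSet y) → x = y) :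
    strongResolvingGraph G 2 = Gᶜ :=
  (SimpleGraph.strongResolvingGraph_two_le_compl htwin).antisymm
    hG.compl_le_strongResolvingGraph_two
end

section
/- If three vertices x, y, z of a connected graph G are pairwise mutually maximally distant, then none of them lies on a geodesic between the other two; hence x, y, z lie in general d-position for every d ≥ 2. -/
/-- `S` is a general `d`-position set of `G`: no three distinct vertices of `S`
lie on a common geodesic of length at most `d`. -/
def IsGenDPos {V : Type*} (G : SimpleGraph V) (d : ℕ) (S : Set V) : Prop :=
  ∀ ⦃u v w : V⦄, u ∈ S → v ∈ S → w ∈ S → u ≠ v → u ≠ w → v ≠ w →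
    G.dist u v + G.dist v w = G.dist u w → G.dist u w ≤ d → False

/-- The general `d`-position number of `G`. -/
noncomputable def gpNum {V : Type*} (G : SimpleGraph V) (d : ℕ) : ℕ :=
  sSup {n | ∃ S : Set V, IsGenDPos G d S ∧ S.ncard = n}

/-! If `y` is maximally distant from `x` and `w` is the first step of a geodesic from `y` to `z`,
then `d(x, z) ≤ d(x, w) + d(w, z) ≤ d(x, y) + d(y, z) - 1`, so `y` is not on an `x`–`z` geodesic.
Pairwise mutual maximal distance therefore forbids every middle vertex, whatever the bound `d`. -/

section

open SimpleGraph

variable {V : Type*} {G : SimpleGraph V} {x y z : V}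

theorem MaxDistant.dist_add_dist_ne (hG : G.Connected) (hyz : y ≠ z) (hy : MaxDistant G y x) :
    G.dist x y + G.dist y z ≠ G.dist x z := by
  obtain ⟨p, hp⟩ := hG.exists_walk_length_eq_dist y z
  cases p with
  | nil => exact (hyz rfl).elim
  | @cons _ w _ hyw q =>
    have hwz : G.dist w z + 1 ≤ G.dist y z := by
      rw [← hp, Walk.length_cons]
      exact Nat.add_le_add_right (dist_le q) 1
    have hxw : G.dist x w ≤ G.dist x y := hy w hyw
    have htri : G.dist x z ≤ G.dist x w + G.dist w z := hG.dist_triangle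
    omega

instance : Std.Symm (MMD G) := ⟨fun _ _ h => ⟨h.2, h.1⟩⟩

theorem isGenDPos_of_pairwise_mmd (hG : G.Connected) {S : Set V} (hS : S.Pairwise (MMD G))
    (d : ℕ) : IsGenDPos G d S := by
  intro u v w hu hv hw huv _ hvw hgeo _
  exact (hS hv hu huv.symm).1.dist_add_dist_ne hG hvw hgeo

end

theorem stmt_19_general {V : Type*} (G : SimpleGraph V) (hG : G.Connected) (x y z : V)
    (hxz : x ≠ z) (hyz : y ≠ z)
    (h1 : MMD G x y) (h2 : MMD G x z) (h3 : MMD G y z) :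
    (G.dist x y + G.dist y z ≠ G.dist x z) ∧
    (G.dist y x + G.dist x z ≠ G.dist y z) ∧
    (G.dist x z + G.dist z y ≠ G.dist x y) ∧
    ∀ d : ℕ, 2 ≤ d → IsGenDPos G d {x, y, z} := by
  have hpair : ({x, y, z} : Set V).Pairwise (MMD G) := by
    simp [Set.pairwise_insert_of_symm, h1, h2, h3]
  exact ⟨h1.2.dist_add_dist_ne hG hyz, h1.1.dist_add_dist_ne hG hxz,
    h2.2.dist_add_dist_ne hG hyz.symm, fun d _ => isGenDPos_of_pairwise_mmd hG hpair d⟩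

/-- If x, y, z are pairwise mutually maximally distant, then none lies on a
geodesic between the other two; hence x, y, z lie in general d-position for
every d ≥ 2. -/
theorem stmt_19 {V : Type*} (G : SimpleGraph V) (hG : G.Connected) (x y z : V)
    (hxy : x ≠ y) (hxz : x ≠ z) (hyz : y ≠ z)
    (h1 : MMD G x y) (h2 : MMD G x z) (h3 : MMD G y z) :
    (G.dist x y + G.dist y z ≠ G.dist x z) ∧
    (G.dist y x + G.dist x z ≠ G.dist y z) ∧
    (G.dist x z + G.dist z y ≠ G.dist x y) ∧
    ∀ d : ℕ, 2 ≤ d → IsGenDPos G d {x, y, z} :=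
  stmt_19_general G hG x y z hxz hyz h1 h2 h3
end
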